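/- arXiv:2307.13347 — 3 statements merged into one kernel-verified Lean document; each statement's English description precedes it below -/
import Mathlib

section
/- Let h be a nonnegative integer-valued histogram with total mass ‖h‖₁ = M, and let τ > 0. The number of elements x with h(x) ≤ τ/10 that have h(x) ≥ 1, after merging, can be grouped into at most 20M/τ groups each with total mass at most τ/10 plus singletons; formally, the sum Σ_{x : h(x) ≤ τ/10} (h(x)/τ)^{b/2} over all such x is at most (20M/τ) · (1/10)^{b/2} · 2^{b/2} for any b ≥ 2. -/
open scoped Classical

/-- On `[0, c]` the convex power `a ^ p` lies below the chord through `0` and `c`. -/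
theorem Real.rpow_le_mul_rpow_sub_one_of_le {a c p : ℝ} (ha : 0 ≤ a) (hac : a ≤ c)
    (hp : 1 ≤ p) : a ^ p ≤ a * c ^ (p - 1) := by
  calc a ^ p = a * a ^ (p - 1) := by
        rw [← Real.rpow_one_add' ha (by linarith), add_sub_cancel]
    _ ≤ a * c ^ (p - 1) := by gcongr

theorem Finset.sum_rpow_le_rpow_sub_one_mul_sum {ι : Type*} (s : Finset ι) {f : ι → ℝ}
    {c p : ℝ} (hf₀ : ∀ i ∈ s, 0 ≤ f i) (hfc : ∀ i ∈ s, f i ≤ c) (hp : 1 ≤ p) :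
    ∑ i ∈ s, f i ^ p ≤ c ^ (p - 1) * ∑ i ∈ s, f i := by
  rw [Finset.mul_sum]
  refine Finset.sum_le_sum fun i hi => ?_
  rw [mul_comm]
  exact Real.rpow_le_mul_rpow_sub_one_of_le (hf₀ i hi) (hfc i hi) hp

/-- Combining tail elements: if `h : X → ℕ` is a histogram with total mass `M` and
`b ≥ 2`, then `Σ_{x : h(x) ≤ τ/10} (h(x)/τ)^{b/2} ≤ (20M/τ)·(1/10)^{b/2}·2^{b/2}`. -/
theorem tail_group_bound {X : Type*} [Fintype X] (h : X → ℕ) (M : ℕ)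
    (hM : ∑ x, h x = M) (τ b : ℝ) (hτ : 0 < τ) (hb : 2 ≤ b) :
    ∑ x ∈ Finset.univ.filter (fun x => (h x : ℝ) ≤ τ / 10),
        ((h x : ℝ) / τ) ^ (b / 2)
      ≤ (20 * M / τ) * (1 / 10 : ℝ) ^ (b / 2) * (2 : ℝ) ^ (b / 2) := by
  set tail := Finset.univ.filter (fun x => (h x : ℝ) ≤ τ / 10)
  have tail_mass : ∑ x ∈ tail, (h x : ℝ) / τ ≤ M / τ := by
    rw [← Finset.sum_div, ← hM, Nat.cast_sum]
    gcongr
    exact Finset.filter_subset _ _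
  have tail_small : ∀ x ∈ tail, (h x : ℝ) / τ ≤ 1 / 10 := fun x hx => by
    rw [div_le_div_iff₀ hτ (by norm_num : (0 : ℝ) < 10)]
    linarith [(Finset.mem_filter.mp hx).2]
  have power_split : (1 / 10 : ℝ) ^ (b / 2 - 1) = 10 * (1 / 10 : ℝ) ^ (b / 2) := by
    rw [Real.rpow_sub (by norm_num), Real.rpow_one]
    ring
  have one_le_two_rpow : 1 ≤ (2 : ℝ) ^ (b / 2) := Real.one_le_rpow (by norm_num) (by linarith)
  calc ∑ x ∈ tail, ((h x : ℝ) / τ) ^ (b / 2)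
      ≤ (1 / 10 : ℝ) ^ (b / 2 - 1) * ∑ x ∈ tail, (h x : ℝ) / τ :=
        tail.sum_rpow_le_rpow_sub_one_mul_sum (fun _ _ => by positivity) tail_small
          (by linarith)
    _ ≤ 10 * (1 / 10 : ℝ) ^ (b / 2) * (M / τ) := by
        rw [power_split]
        gcongr
    _ ≤ 10 * (1 / 10 : ℝ) ^ (b / 2) * (M / τ) * (2 * (2 : ℝ) ^ (b / 2)) := by
        refine le_mul_of_one_le_right (by positivity) ?_
        linarith
    _ = (20 * M / τ) * (1 / 10 : ℝ) ^ (b / 2) * (2 : ℝ) ^ (b / 2) := by ring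
end

section
/- Suppose a histogram h over a finite domain has total mass at most mn (m, n positive integers), and each element is independently retained with probability at most 1/τ for an integer τ ≥ 1 with mn > 4τ. Then for R > 32, the number of retained distinct elements exceeds (2mn/τ)·log R with probability at most 1/(32R). -/
open MeasureTheory ProbabilityTheory
open scoped Classical ENNReal

/-!
Only the elements in the support of `h` can be counted, and there are at most `mn` of them, so
the count is a sum of at most `mn` independent indicators of mean at most `1/τ`. Write
`c = mn/τ ≥ 4` and `L = log R`. The Chernoff bound at `t = log L` gives
`P(count ≥ 2cL) ≤ exp(-2cL log L + c(L - 1))`, and since `log L ≥ 1` the exponent is at most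
`-cL ≤ -4L`, so the probability is at most `R⁻⁴ ≤ 1/(32R)`.
-/

open Real Finset

lemma Finset.cast_card_filter_eq_sum_indicator {Ω ι : Type*} (X : ι → Ω → Bool) (s : Finset ι)
    (ω : Ω) : (#{i ∈ s | X i ω = true} : ℝ) = (∑ i ∈ s, (X i ⁻¹' {true}).indicator 1) ω := by
  rw [card_filter, Finset.sum_apply]
  push_cast
  refine sum_congr rfl fun i _ => ?_
  by_cases hi : X i ω = true <;> simp [hi]

lemma Finset.card_filter_pos_le_sum {ι : Type*} (s : Finset ι) (f : ι → ℕ) :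
    #{i ∈ s | 0 < f i} ≤ ∑ i ∈ s, f i :=
  calc #{i ∈ s | 0 < f i} = ∑ i ∈ s with 0 < f i, 1 := card_eq_sum_ones _
    _ ≤ ∑ i ∈ s with 0 < f i, f i := sum_le_sum fun _ hi => (mem_filter.1 hi).2
    _ ≤ ∑ i ∈ s, f i := sum_le_sum_of_subset (filter_subset _ _)

lemma Real.three_le_log {R : ℝ} (hR : 33 ≤ R) : 3 ≤ log R := by
  rw [le_log_iff_exp_le (by linarith), show (3 : ℝ) = (3 : ℕ) by norm_num, ← exp_one_pow]
  have : exp 1 ^ 3 < 2.7182818286 ^ 3 := by gcongr; exact exp_one_lt_d9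
  linarith [show (2.7182818286 : ℝ) ^ 3 < 33 by norm_num]

lemma Real.exp_neg_four_mul_log_le {R : ℝ} (hR : 4 ≤ R) : exp (-4 * log R) ≤ 1 / (32 * R) := by
  have hR0 : 0 < R := by linarith
  rw [neg_mul, exp_neg, show (4 : ℝ) = (4 : ℕ) by norm_num, exp_nat_mul, exp_log hR0, one_div]
  gcongr
  nlinarith [mul_le_mul hR hR (by norm_num) hR0.le]

lemma chernoff_exponent_le {c L : ℝ} (hc : 4 ≤ c) (hL : 3 ≤ L) :
    -log L * (2 * c * L) + c * (L - 1) ≤ -4 * L := by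
  have hlogL : 1 ≤ log L := by
    rw [le_log_iff_exp_le (by linarith)]
    linarith [exp_one_lt_three]
  nlinarith [mul_nonneg (mul_nonneg (by linarith : (0 : ℝ) ≤ c) (by linarith : (0 : ℝ) ≤ L))
    (sub_nonneg.2 hlogL)]

namespace ProbabilityTheory

variable {Ω ι : Type*} [MeasurableSpace Ω] {μ : Measure Ω} [IsProbabilityMeasure μ]

lemma mgf_indicator_one {A : Set Ω} (hA : MeasurableSet A) (t : ℝ) :
    mgf (A.indicator 1) μ t = 1 + (exp t - 1) * μ.real A := by
  have hlin : (fun ω => exp (t * A.indicator 1 ω))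
      = fun ω => 1 + (exp t - 1) * A.indicator 1 ω := by
    funext ω
    by_cases hω : ω ∈ A <;> simp [hω]
  have hI : Integrable (A.indicator (1 : Ω → ℝ)) μ := (integrable_const 1).indicator hA
  rw [mgf, hlin, integral_add (integrable_const 1) (hI.const_mul _), integral_const_mul,
    integral_indicator_one hA]
  simp

lemma mgf_indicator_one_le_exp {A : Set Ω} (hA : MeasurableSet A) {p t : ℝ}
    (hp : μ.real A ≤ p) (ht : 0 ≤ t) :
    mgf (A.indicator 1) μ t ≤ exp (p * (exp t - 1)) := by
  have hexp : 0 ≤ exp t - 1 := by linarith [one_le_exp ht]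
  calc mgf (A.indicator 1) μ t = 1 + (exp t - 1) * μ.real A := mgf_indicator_one hA t
    _ ≤ p * (exp t - 1) + 1 := by nlinarith
    _ ≤ exp (p * (exp t - 1)) := add_one_le_exp _

theorem measure_ge_card_filter_le_exp {X : ι → Ω → Bool} (hmeas : ∀ i, Measurable (X i))
    (hindep : iIndepFun X μ) {p : ℝ} (hp : ∀ i, μ.real (X i ⁻¹' {true}) ≤ p)
    (s : Finset ι) (a : ℝ) {t : ℝ} (ht : 0 ≤ t) :
    μ.real {ω | a ≤ #{i ∈ s | X i ω = true}} ≤ exp (-t * a + #s * p * (exp t - 1)) := by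
  set Y : ι → Ω → ℝ := fun i => (X i ⁻¹' {true}).indicator 1
  have hA : ∀ i, MeasurableSet (X i ⁻¹' {true}) := fun i => hmeas i (measurableSet_singleton _)
  have hYmeas : ∀ i, Measurable (Y i) := fun i => measurable_one.indicator (hA i)
  have hYindep : iIndepFun Y μ := by
    convert hindep.comp (fun _ => ({true} : Set Bool).indicator (1 : Bool → ℝ))
      (fun _ => measurable_from_top) with i
    exact funext fun ω => Set.indicator_comp_right (g := (1 : Bool → ℝ)) (X i)
  have hint : ∀ i ∈ s, Integrable (fun ω => exp (t * Y i ω)) μ := fun i _ =>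
    integrable_exp_mul_of_le t 1 ht (hYmeas i).aemeasurable
      (ae_of_all _ fun ω => Set.indicator_le_self' (fun _ _ => zero_le_one) ω)
  simp_rw [cast_card_filter_eq_sum_indicator X s]
  calc μ.real {ω | a ≤ (∑ i ∈ s, Y i) ω}
      ≤ exp (-t * a) * mgf (∑ i ∈ s, Y i) μ t :=
        measure_ge_le_exp_mul_mgf a ht (hYindep.integrable_exp_mul_sum hYmeas hint)
    _ ≤ exp (-t * a) * ∏ _i ∈ s, exp (p * (exp t - 1)) := by
        rw [hYindep.mgf_sum hYmeas]
        gcongr with i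
        · exact fun i _ => mgf_nonneg
        · exact mgf_indicator_one_le_exp (hA i) (hp i) ht
    _ = exp (-t * a + #s * p * (exp t - 1)) := by
        rw [prod_const, ← exp_nat_mul, ← exp_add, mul_assoc]

theorem measure_card_filter_ge_two_mul_log_le {X : ι → Ω → Bool}
    (hmeas : ∀ i, Measurable (X i)) (hindep : iIndepFun X μ) {p c R : ℝ}
    (hp : ∀ i, μ.real (X i ⁻¹' {true}) ≤ p) {s : Finset ι} (hs : #s * p ≤ c) (hc : 4 ≤ c)
    (hR : 33 ≤ R) :
    μ.real {ω | 2 * c * log R ≤ #{i ∈ s | X i ω = true}} ≤ 1 / (32 * R) := by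
  have hL : 3 ≤ log R := three_le_log hR
  calc _ ≤ exp (-log (log R) * (2 * c * log R) + #s * p * (exp (log (log R)) - 1)) :=
        measure_ge_card_filter_le_exp hmeas hindep hp s _ (log_nonneg (by linarith))
    _ ≤ exp (-log (log R) * (2 * c * log R) + c * (log R - 1)) := by
        rw [exp_log (by linarith)]
        gcongr
        linarith
    _ ≤ exp (-4 * log R) := exp_le_exp.2 (chernoff_exponent_le hc hL)
    _ ≤ 1 / (32 * R) := exp_neg_four_mul_log_le (by linarith)

end ProbabilityTheory

theorem retained_count_bound_general {Ω : Type*} [MeasurableSpace Ω] (μ : Measure Ω)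
    [IsProbabilityMeasure μ] (D m n τ R : ℕ)
    (hτ : 1 ≤ τ) (hmn : 4 * τ < m * n) (hR : 32 < R)
    (h : Fin D → ℕ) (hmass : ∑ x, h x ≤ m * n)
    (keep : Fin D → Ω → Bool) (hmeas : ∀ x, Measurable (keep x))
    (hindep : iIndepFun keep μ)
    (hprob : ∀ x, μ (keep x ⁻¹' {true}) ≤ (τ : ℝ≥0∞)⁻¹) :
    μ {ω | (2 * (m * n : ℝ) / τ) * Real.log R
        < (Finset.univ.filter (fun x => keep x ω = true ∧ 0 < h x)).card}
      ≤ 1 / (32 * R) := by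
  set s : Finset (Fin D) := {x | 0 < h x}
  set c : ℝ := (m * n : ℝ) / τ
  have hτ0 : (0 : ℝ) < τ := by exact_mod_cast hτ
  have hp : ∀ x, μ.real (keep x ⁻¹' {true}) ≤ (τ : ℝ)⁻¹ := fun x => by
    simpa [measureReal_def] using ENNReal.toReal_mono (by simp; omega) (hprob x)
  have hc : 4 ≤ c := by
    rw [le_div_iff₀ hτ0]
    exact_mod_cast hmn.le
  have hs : (#s : ℝ) * (τ : ℝ)⁻¹ ≤ c := by
    rw [← div_eq_mul_inv]
    show (#s : ℝ) / τ ≤ (m * n : ℝ) / τ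
    gcongr
    exact_mod_cast (card_filter_pos_le_sum univ h).trans hmass
  have hevent : {ω | 2 * (m * n : ℝ) / τ * log R < (#{x | keep x ω = true ∧ 0 < h x} : ℝ)}
      ⊆ {ω | 2 * c * log R ≤ (#{x ∈ s | keep x ω = true} : ℝ)} := fun ω hω => by
    simp only [Set.mem_ofPred_eq, s, filter_filter, and_comm] at hω ⊢
    rw [mul_div_assoc] at hω
    exact hω.le
  calc _ ≤ μ {ω | 2 * c * log R ≤ (#{x ∈ s | keep x ω = true} : ℝ)} := measure_mono hevent
    _ = ENNReal.ofReal (μ.real {ω | 2 * c * log R ≤ (#{x ∈ s | keep x ω = true} : ℝ)}) :=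
        (ofReal_measureReal).symm
    _ ≤ ENNReal.ofReal (1 / (32 * R)) := ENNReal.ofReal_le_ofReal
        (measure_card_filter_ge_two_mul_log_le hmeas hindep hp hs hc (by exact_mod_cast hR))
    _ = 1 / (32 * R) := by
        rw [ENNReal.ofReal_div_of_pos (by positivity)]
        simp

/-- If a histogram over a finite domain has total mass at most `mn` and each element is
independently retained with probability at most `1/τ` (with `τ ≥ 1`, `mn > 4τ`), then
for `R > 32` the number of retained distinct elements exceeds `(2mn/τ)·log R` with
probability at most `1/(32R)`. -/
theorem retained_count_bound {Ω : Type*} [MeasurableSpace Ω] (μ : Measure Ω)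
    [IsProbabilityMeasure μ] (D m n τ R : ℕ) (hm : 0 < m) (hn : 0 < n)
    (hτ : 1 ≤ τ) (hmn : 4 * τ < m * n) (hR : 32 < R)
    (h : Fin D → ℕ) (hmass : ∑ x, h x ≤ m * n)
    (keep : Fin D → Ω → Bool) (hmeas : ∀ x, Measurable (keep x))
    (hindep : iIndepFun keep μ)
    (hprob : ∀ x, μ (keep x ⁻¹' {true}) ≤ (τ : ℝ≥0∞)⁻¹) :
    μ {ω | (2 * (m * n : ℝ) / τ) * Real.log R
        < (Finset.univ.filter (fun x => keep x ω = true ∧ 0 < h x)).card}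
      ≤ 1 / (32 * R) :=
  retained_count_bound_general μ D m n τ R hτ hmn hR h hmass keep hmeas hindep hprob
end

section
/- Count-sketch single-bucket variance bound: let x be a fixed element, let g : [d] → [w] be a uniformly random hash, and let s_{r} : [d] → {±1}, r ∈ [R], be independent uniformly random sign hashes (fresh per round, independent of g). For histograms h^{(r)} over [d], define the error E = Σ_{x' ≠ x} 1[g(x') = g(x)] Σ_{r=1}^R s_r(x') s_r(x) h^{(r)}(x'). Then E[E] = 0 and E[E²] ≤ (1/w) · (max_{x'≠x} h^{[R]}(x')) · (Σ_{x'≠x} h^{[R]}(x')), where h^{[R]}(x') = Σ_r h^{(r)}(x'). -/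
/-!
Write the error as `E = ∑_{(x', r)} a_{x',r} Z_{x',r}` with `Z_{x',r} = s_r(x') s_r(x)` and
`a_{x',r} = 1[g(x') = g(x)] h^{(r)}(x')`. Flipping the single sign `s_r(x')` is a bijection of the
sign hashes that negates `Z_{x',r}` and fixes every other `Z_{x'',r'}` (as `x', x'' ≠ x`), so for
each fixed `g` the `Z`'s have mean zero and are orthonormal. Hence `E[E | g] = 0` and
`E[E² | g] = ∑ a²`; averaging over `g`, where `P(g(x') = g(x)) = 1/w`, gives
`E[E²] = (1/w) ∑_{x' ≠ x} ∑_r h^{(r)}(x')²`, and `∑_r h_r² ≤ (∑_r h_r)² ≤ (max h^{[R]}) · h^{[R]}`.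
-/

open scoped Classical

open Finset
open scoped BigOperators

theorem Fintype.expect_eq_zero_of_involutive {ι M : Type*} [Fintype ι] [AddCommGroup M]
    [Module ℚ≥0 M] [IsAddTorsionFree M] {φ : ι → ι} (hφ : Function.Involutive φ) {F : ι → M}
    (hF : ∀ i, F (φ i) = -F i) : 𝔼 i, F i = 0 := by
  have h : 𝔼 i, F i = 𝔼 i, -F i :=
    Fintype.expect_bijective φ hφ.bijective _ _ fun i => by rw [hF, neg_neg]
  rwa [expect_neg_distrib, eq_comm, neg_eq_self] at h

theorem Fintype.expect_prod_type {ι κ M : Type*} [Fintype ι] [Fintype κ] [AddCommMonoid M]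
    [Module ℚ≥0 M] (f : ι × κ → M) : 𝔼 p, f p = 𝔼 i, 𝔼 j, f (i, j) := by
  rw [← univ_product_univ, expect_product]

theorem expect_ite_apply_eq_apply {α β : Type*} [Fintype α] [DecidableEq α] [Fintype β]
    [DecidableEq β] [Nonempty β] {a b : α} (hab : a ≠ b) (c : ℝ) :
    𝔼 g : α → β, (if g a = g b then c else 0) = c / Fintype.card β := by
  rw [Fintype.expect_equiv (Equiv.funSplitAt a β) (fun g => if g a = g b then c else 0)
    (fun q => if q.1 = q.2 ⟨b, hab.symm⟩ then c else 0) fun _ => rfl,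
    Fintype.expect_prod_type, Finset.expect_comm]
  simp [NNRat.smul_def, div_eq_inv_mul]

theorem sum_sq_le_sup'_mul_sum {ι : Type*} {s : Finset ι} (hs : s.Nonempty) {f : ι → ℝ}
    (hf : ∀ i ∈ s, 0 ≤ f i) : ∑ i ∈ s, f i ^ 2 ≤ s.sup' hs f * ∑ i ∈ s, f i := by
  rw [mul_sum]
  refine sum_le_sum fun i hi => ?_
  rw [sq]
  exact mul_le_mul_of_nonneg_right (le_sup' f hi) (hf i hi)

theorem expect_sq_sum_of_orthonormal {ι Ω : Type*} [Fintype Ω] [DecidableEq ι] (I : Finset ι)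
    (a : ι → ℝ) (Z : ι → Ω → ℝ)
    (hZ : ∀ i ∈ I, ∀ j ∈ I, 𝔼 ω, Z i ω * Z j ω = if i = j then 1 else 0) :
    𝔼 ω, (∑ i ∈ I, a i * Z i ω) ^ 2 = ∑ i ∈ I, a i ^ 2 := by
  calc 𝔼 ω, (∑ i ∈ I, a i * Z i ω) ^ 2
      = ∑ i ∈ I, ∑ j ∈ I, a i * a j * 𝔼 ω, Z i ω * Z j ω := by
        simp_rw [sq, sum_mul_sum, expect_sum_comm, mul_expect, mul_mul_mul_comm]
    _ = ∑ i ∈ I, a i ^ 2 := by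
        refine sum_congr rfl fun i hi => ?_
        rw [sum_congr rfl fun j hj => by rw [hZ i hi j hj], sum_eq_single_of_mem i hi]
        · simp [sq]
        · intro j _ hji
          simp [hji.symm]

section SignHash

variable {ρ α : Type*}

def boolSign (b : Bool) : ℝ := if b then 1 else -1

theorem boolSign_not (b : Bool) : boolSign (!b) = -boolSign b := by
  cases b <;> simp [boolSign]

theorem boolSign_mul_self (b : Bool) : boolSign b * boolSign b = 1 := by
  cases b <;> simp [boolSign]

/-- `crossSign x (a, r) s = s_r(a) s_r(x)`. -/
def crossSign (x : α) (p : α × ρ) (s : ρ → α → Bool) : ℝ :=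
  boolSign (s p.2 p.1) * boolSign (s p.2 x)

theorem crossSign_mul_self (x : α) (p : α × ρ) (s : ρ → α → Bool) :
    crossSign x p s * crossSign x p s = 1 := by
  rw [crossSign, mul_mul_mul_comm, boolSign_mul_self, boolSign_mul_self, one_mul]

variable [DecidableEq ρ] [DecidableEq α]

def flipAt (r : ρ) (a : α) (s : ρ → α → Bool) : ρ → α → Bool :=
  fun r' a' => if r' = r ∧ a' = a then !s r' a' else s r' a'

theorem flipAt_involutive (r : ρ) (a : α) : Function.Involutive (flipAt r a) := by
  intro s
  funext r' a'
  by_cases hc : r' = r ∧ a' = a <;> simp [flipAt, hc]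

theorem flipAt_apply_self (r : ρ) (a : α) (s : ρ → α → Bool) : flipAt r a s r a = !s r a := by
  simp [flipAt]

theorem flipAt_apply_of_ne {r r' : ρ} {a a' : α} (h : (r', a') ≠ (r, a)) (s : ρ → α → Bool) :
    flipAt r a s r' a' = s r' a' := by
  simp_all [flipAt]

theorem crossSign_flipAt_self {x : α} {p : α × ρ} (hp : p.1 ≠ x) (s : ρ → α → Bool) :
    crossSign x p (flipAt p.2 p.1 s) = -crossSign x p s := by
  rw [crossSign, crossSign, flipAt_apply_self, flipAt_apply_of_ne (by simp [hp.symm]), boolSign_not,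
    neg_mul]

theorem crossSign_flipAt_of_ne {x : α} {p q : α × ρ} (hp : p.1 ≠ x) (hqp : q ≠ p)
    (s : ρ → α → Bool) : crossSign x q (flipAt p.2 p.1 s) = crossSign x q s := by
  rw [crossSign, crossSign, flipAt_apply_of_ne (by contrapose! hqp; simp_all [Prod.ext_iff]),
    flipAt_apply_of_ne (by simp [hp.symm])]

variable [Fintype ρ] [Fintype α]

theorem expect_crossSign {x : α} {p : α × ρ} (hp : p.1 ≠ x) : 𝔼 s, crossSign x p s = 0 :=
  Fintype.expect_eq_zero_of_involutive (flipAt_involutive p.2 p.1) (crossSign_flipAt_self hp)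

theorem expect_crossSign_mul_crossSign {x : α} {p q : α × ρ} (hp : p.1 ≠ x) :
    𝔼 s, crossSign x p s * crossSign x q s = if p = q then 1 else 0 := by
  split_ifs with hpq
  · subst hpq
    simp_rw [crossSign_mul_self]
    exact Fintype.expect_one
  · refine Fintype.expect_eq_zero_of_involutive (flipAt_involutive p.2 p.1) fun s => ?_
    rw [crossSign_flipAt_self hp, crossSign_flipAt_of_ne hp (Ne.symm hpq), neg_mul]

end SignHash

section Bucket

variable {ρ α β : Type*} [Fintype ρ] [DecidableEq ρ] [Fintype α] [DecidableEq α] [DecidableEq β]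

def bucketError (h : ρ → α → ℝ) (x : α) (g : α → β) (s : ρ → α → Bool) : ℝ :=
  ∑ p ∈ univ.erase x ×ˢ univ, (if g p.1 = g x then h p.2 p.1 else 0) * crossSign x p s

theorem expect_bucketError (h : ρ → α → ℝ) (x : α) (g : α → β) :
    𝔼 s, bucketError h x g s = 0 := by
  simp_rw [bucketError, expect_sum_comm, ← mul_expect]
  refine sum_eq_zero fun p hp => ?_
  rw [expect_crossSign (ne_of_mem_erase (mem_product.1 hp).1), mul_zero]

theorem expect_bucketError_sq (h : ρ → α → ℝ) (x : α) (g : α → β) :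
    𝔼 s, bucketError h x g s ^ 2 =
      ∑ p ∈ univ.erase x ×ˢ univ, if g p.1 = g x then h p.2 p.1 ^ 2 else 0 := by
  simp only [bucketError]
  rw [expect_sq_sum_of_orthonormal _ _ _ fun p hp q _ =>
    expect_crossSign_mul_crossSign (ne_of_mem_erase (mem_product.1 hp).1)]
  simp_rw [ite_pow, zero_pow two_ne_zero]

theorem expect_expect_bucketError_sq [Fintype β] [Nonempty β] (h : ρ → α → ℝ) (x : α) :
    𝔼 g : α → β, 𝔼 s, bucketError h x g s ^ 2 =
      (∑ a ∈ univ.erase x, ∑ r, h r a ^ 2) / Fintype.card β := by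
  simp_rw [expect_bucketError_sq, expect_sum_comm, sum_product, sum_div]
  refine sum_congr rfl fun a ha => sum_congr rfl fun r _ => ?_
  exact expect_ite_apply_eq_apply (ne_of_mem_erase ha) _

end Bucket

theorem countsketch_variance_general (d w R : ℕ) (hw : 0 < w)
    (h : Fin R → Fin d → ℝ) (hh : ∀ r x', 0 ≤ h r x') (x : Fin d)
    (hne : (Finset.univ.erase x).Nonempty) :
    let sign : Bool → ℝ := fun b => if b then 1 else -1
    let Err : (Fin d → Fin w) × (Fin R → Fin d → Bool) → ℝ := fun gs =>
      ∑ x' ∈ Finset.univ.erase x, (if gs.1 x' = gs.1 x then (1 : ℝ) else 0) *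
        ∑ r, sign (gs.2 r x') * sign (gs.2 r x) * h r x'
    ((∑ gs : (Fin d → Fin w) × (Fin R → Fin d → Bool), Err gs) /
        (Fintype.card ((Fin d → Fin w) × (Fin R → Fin d → Bool)) : ℝ) = 0)
    ∧ (∑ gs : (Fin d → Fin w) × (Fin R → Fin d → Bool), (Err gs) ^ 2) /
        (Fintype.card ((Fin d → Fin w) × (Fin R → Fin d → Bool)) : ℝ)
      ≤ (1 / w) * ((Finset.univ.erase x).sup' hne (fun x' => ∑ r, h r x')) *
          (∑ x' ∈ Finset.univ.erase x, ∑ r, h r x') := by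
  intro sign Err
  have hErr : ∀ gs, Err gs = bucketError h x gs.1 gs.2 := fun gs => by
    simp only [Err, bucketError, sum_product, mul_sum]
    refine sum_congr rfl fun a _ => sum_congr rfl fun r _ => ?_
    split_ifs <;> simp [crossSign, boolSign, sign]
  have : Nonempty (Fin w) := ⟨⟨0, hw⟩⟩
  simp only [← Fintype.expect_eq_sum_div_card, hErr, Fintype.expect_prod_type]
  refine ⟨by simp only [expect_bucketError, Fintype.expect_const], ?_⟩
  have hsq : ∑ a ∈ univ.erase x, ∑ r, h r a ^ 2 ≤ (univ.erase x).sup' hne (fun a => ∑ r, h r a) *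
      ∑ a ∈ univ.erase x, ∑ r, h r a :=
    (sum_le_sum fun a _ => sum_sq_le_sq_sum_of_nonneg fun r _ => hh r a).trans
      (sum_sq_le_sup'_mul_sum hne fun a _ => sum_nonneg fun r _ => hh r a)
  rw [expect_expect_bucketError_sq, Fintype.card_fin, mul_assoc, div_eq_inv_mul, one_div]
  gcongr

/-- Count-sketch single-bucket error: with a uniformly random location hash
`g : [d] → [w]` and fresh uniformly random sign hashes `s_r : [d] → {±1}` per round,
the error `E = Σ_{x'≠x} 1[g(x')=g(x)] Σ_r s_r(x') s_r(x) h^{(r)}(x')` satisfies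
`E[E] = 0` and `E[E²] ≤ (1/w)·(max_{x'≠x} h^{[R]}(x'))·(Σ_{x'≠x} h^{[R]}(x'))`. -/
theorem countsketch_variance (d w R : ℕ) (hw : 0 < w) (hR : 0 < R)
    (h : Fin R → Fin d → ℝ) (hh : ∀ r x', 0 ≤ h r x') (x : Fin d)
    (hne : (Finset.univ.erase x).Nonempty) :
    let sign : Bool → ℝ := fun b => if b then 1 else -1
    let Err : (Fin d → Fin w) × (Fin R → Fin d → Bool) → ℝ := fun gs =>
      ∑ x' ∈ Finset.univ.erase x, (if gs.1 x' = gs.1 x then (1 : ℝ) else 0) *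
        ∑ r, sign (gs.2 r x') * sign (gs.2 r x) * h r x'
    ((∑ gs : (Fin d → Fin w) × (Fin R → Fin d → Bool), Err gs) /
        (Fintype.card ((Fin d → Fin w) × (Fin R → Fin d → Bool)) : ℝ) = 0)
    ∧ (∑ gs : (Fin d → Fin w) × (Fin R → Fin d → Bool), (Err gs) ^ 2) /
        (Fintype.card ((Fin d → Fin w) × (Fin R → Fin d → Bool)) : ℝ)
      ≤ (1 / w) * ((Finset.univ.erase x).sup' hne (fun x' => ∑ r, h r x')) *
          (∑ x' ∈ Finset.univ.erase x, ∑ r, h r x') :=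
  countsketch_variance_general d w R hw h hh x hne
end
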